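/- Let C be a crystal framework in ℝ^d with a chosen periodic structure and geometric flex spectrum Γ(C) = {ω ∈ (ℂ\{0})^d : ker Ψ_C(ω⁻¹) ≠ 0}, where Ψ_C(z) is the transfer function. Then the complex first-order flex space F(C;ℂ) is finite-dimensional if and only if Γ(C) is a finite set. -/

import Mathlib

/-! ### Auxiliary material: group algebra of `ℤ^d` and difference equations -/

/-- The `i`-th coordinate direction in `ℤ^d`, scaled by `t`. -/
def dir {d : ℕ} (i : Fin d) (t : ℤ) : Fin d → ℤ := fun j => if j = i then t else 0

lemma dir_apply_self {d : ℕ} (i : Fin d) (t : ℤ) : dir i t i = t := by simp [dir]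
lemma dir_apply_ne {d : ℕ} {i j : Fin d} (t : ℤ) (h : j ≠ i) : dir i t j = 0 := by simp [dir, h]
lemma dir_zero {d : ℕ} (i : Fin d) : dir i 0 = 0 := by funext j; simp [dir]
lemma dir_add_dir {d : ℕ} (i : Fin d) (x y : ℤ) : dir i x + dir i y = dir i (x + y) := by
  funext j; by_cases h : j = i <;> simp [dir, h]

/-- The group algebra of `ℤ^d` over `ℂ`: multivariate Laurent polynomials. -/
abbrev Lau (d : ℕ) := AddMonoidAlgebra ℂ (Fin d → ℤ)

/-- Pairing of a sequence on `ℤ^d` with a Laurent polynomial. -/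
noncomputable def pairV {d : ℕ} (v : (Fin d → ℤ) → ℂ) (f : Lau d) : ℂ :=
  Finsupp.sum f.coeff fun a c => c * v a

lemma pairV_single {d : ℕ} (v : (Fin d → ℤ) → ℂ) (a : Fin d → ℤ) (c : ℂ) :
    pairV v (AddMonoidAlgebra.single a c) = c * v a := by
  unfold pairV; rw [AddMonoidAlgebra.coeff_single]
  exact Finsupp.sum_single_index (by simp)

lemma pairV_add {d : ℕ} (v : (Fin d → ℤ) → ℂ) (f g : Lau d) :
    pairV v (f + g) = pairV v f + pairV v g := by
  unfold pairV; rw [AddMonoidAlgebra.coeff_add]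
  exact Finsupp.sum_add_index' (by simp) (by intros; ring)

lemma pairV_zero {d : ℕ} (v : (Fin d → ℤ) → ℂ) : pairV v 0 = 0 := by
  unfold pairV; simp

lemma pairV_sub {d : ℕ} (v : (Fin d → ℤ) → ℂ) (f g : Lau d) :
    pairV v (f - g) = pairV v f - pairV v g := by
  unfold pairV; rw [AddMonoidAlgebra.coeff_sub]
  exact Finsupp.sum_sub_index (by intros; ring)

lemma pairV_smul {d : ℕ} (v : (Fin d → ℤ) → ℂ) (b : ℂ) (f : Lau d) :
    pairV v (b • f) = b * pairV v f := by
  unfold pairV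
  rw [AddMonoidAlgebra.coeff_smul, Finsupp.sum_smul_index' (by simp)]
  simp only [smul_eq_mul, Finsupp.sum, Finset.mul_sum]
  exact Finset.sum_congr rfl fun x _ => by ring

lemma pairV_sum {d : ℕ} (v : (Fin d → ℤ) → ℂ) {α : Type*} (s : Finset α) (F : α → Lau d) :
    pairV v (∑ x ∈ s, F x) = ∑ x ∈ s, pairV v (F x) := by
  classical
  induction s using Finset.induction_on with
  | empty => simp [pairV_zero]
  | insert _ _ h ih => rw [Finset.sum_insert h, pairV_add, ih, Finset.sum_insert h]

/-- The set of Laurent polynomials all of whose `ℤ^d`-translates annihilate `v`. -/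
noncomputable def annIdeal {d : ℕ} (v : (Fin d → ℤ) → ℂ) : Ideal (Lau d) where
  carrier := {f | ∀ μ : Fin d → ℤ, pairV v (AddMonoidAlgebra.single μ 1 * f) = 0}
  zero_mem' := by intro μ; simp [pairV_zero]
  add_mem' := by
    intro f g hf hg μ
    rw [mul_add, pairV_add, hf μ, hg μ, add_zero]
  smul_mem' := by
    intro r f hf
    simp only [smul_eq_mul, Set.mem_setOf_eq]
    induction r using AddMonoidAlgebra.induction_linear with
    | zero => intro μ; simp [pairV_zero]
    | add p q hp hq => intro μ; rw [add_mul, mul_add, pairV_add, hp μ, hq μ, add_zero]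
    | single a b =>
      intro μ
      have h1 : (AddMonoidAlgebra.single μ (1:ℂ)) * (AddMonoidAlgebra.single a b * f)
          = AddMonoidAlgebra.single a b * (AddMonoidAlgebra.single μ 1 * f) := by
        ring
      rw [h1]
      have hb : (AddMonoidAlgebra.single a b : Lau d) = b • AddMonoidAlgebra.single a 1 := by
        rw [AddMonoidAlgebra.smul_single', mul_one]
      rw [hb, smul_mul_assoc, pairV_smul]
      have h2 : (AddMonoidAlgebra.single a (1:ℂ)) * (AddMonoidAlgebra.single μ 1 * f)
          = AddMonoidAlgebra.single (a + μ) 1 * f := by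
        rw [← mul_assoc, AddMonoidAlgebra.single_mul_single, one_mul]
      rw [h2, hf (a + μ), mul_zero]

lemma mem_annIdeal_iff {d : ℕ} (v : (Fin d → ℤ) → ℂ) (f : Lau d) :
    f ∈ annIdeal v ↔ ∀ μ : Fin d → ℤ, pairV v (AddMonoidAlgebra.single μ 1 * f) = 0 :=
  Iff.rfl

/-- Solutions of `d` one-directional recurrences with invertible extreme coefficients which
vanish on the fundamental box vanish identically. -/
lemma vanish_of_box {d : ℕ} (s : Fin d → ℕ) (a : Fin d → ℕ → ℂ)
    (h0 : ∀ i, a i 0 ≠ 0) (htop : ∀ i, a i (s i) ≠ 0)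
    (v : (Fin d → ℤ) → ℂ)
    (hrec : ∀ i μ, ∑ t ∈ Finset.range (s i + 1), a i t * v (μ + dir i (t : ℤ)) = 0)
    (hbox : ∀ μ : Fin d → ℤ, (∀ i, 0 ≤ μ i ∧ μ i < (s i : ℤ)) → v μ = 0) :
    ∀ μ, v μ = 0 := by
  classical
  set W : (Fin d → ℤ) → ℕ :=
    fun μ => ∑ i, ((-(μ i)).toNat + (μ i - (s i : ℤ) + 1).toNat) with hW
  have key : ∀ N : ℕ, ∀ μ, W μ = N → v μ = 0 := by
    intro N
    induction N using Nat.strong_induction_on with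
    | _ N IH =>
      intro μ hμ
      by_cases hB : ∀ i, 0 ≤ μ i ∧ μ i < (s i : ℤ)
      · exact hbox μ hB
      · push_neg at hB
        obtain ⟨i, hi⟩ := hB
        have hstep : ∀ t : ℤ,
            ((-(μ i + t)).toNat + (μ i + t - (s i:ℤ) + 1).toNat)
              < ((-(μ i)).toNat + (μ i - (s i:ℤ) + 1).toNat) → v (μ + dir i t) = 0 := by
          intro t hlt
          refine IH (W (μ + dir i t)) ?_ _ rfl
          rw [← hμ, hW]
          apply Finset.sum_lt_sum
          · intro j _
            by_cases hj : j = i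
            · subst hj
              simp only [Pi.add_apply, dir_apply_self]
              exact le_of_lt hlt
            · simp [Pi.add_apply, dir_apply_ne t hj]
          · exact ⟨i, Finset.mem_univ i, by
              simp only [Pi.add_apply, dir_apply_self]; exact hlt⟩
        by_cases hneg : μ i < 0
        · have hsum := hrec i μ
          rw [Finset.sum_eq_single_of_mem 0 (Finset.mem_range.mpr (Nat.succ_pos _))
            (fun t ht htne => ?_)] at hsum
          · rw [Nat.cast_zero, dir_zero, add_zero] at hsum
            exact (mul_eq_zero.mp hsum).resolve_left (h0 i)
          · have ht' := Finset.mem_range.mp ht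
            rw [hstep (t:ℤ) (by omega), mul_zero]
        · have hge : (s i : ℤ) ≤ μ i := by
            push_neg at hneg
            have := hi hneg; omega
          have hsum := hrec i (μ + dir i (-(s i : ℤ)))
          have hpt : ∀ t : ℕ, μ + dir i (-(s i:ℤ)) + dir i (t:ℤ) = μ + dir i ((t:ℤ) - s i) := by
            intro t
            rw [add_assoc, dir_add_dir]
            ring_nf
          simp only [hpt] at hsum
          rw [Finset.sum_eq_single_of_mem (s i) (Finset.mem_range.mpr (Nat.lt_succ_self _))
            (fun t ht htne => ?_)] at hsum
          · rw [sub_self, dir_zero, add_zero] at hsum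
            exact (mul_eq_zero.mp hsum).resolve_left (htop i)
          · have ht' := Finset.mem_range.mp ht
            rw [hstep ((t:ℤ) - s i) (by omega), mul_zero]
  intro μ; exact key (W μ) μ rfl

/-- The Laurent monomial `zᵢ`. -/
noncomputable def xvar {d : ℕ} (i : Fin d) : Lau d := AddMonoidAlgebra.single (dir i 1) 1

lemma xvar_pow {d : ℕ} (i : Fin d) (t : ℕ) :
    (xvar i) ^ t = AddMonoidAlgebra.single (dir i (t : ℤ)) 1 := by
  rw [xvar, AddMonoidAlgebra.single_pow]
  congr 1
  · funext j; by_cases h : j = i <;> simp [dir, h]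
  · simp

lemma pairV_single_mul_aeval {d : ℕ} (v : (Fin d → ℤ) → ℂ) (i : Fin d) (Q : Polynomial ℂ)
    (μ : Fin d → ℤ) :
    pairV v (AddMonoidAlgebra.single μ 1 * Polynomial.aeval (xvar i) Q)
      = ∑ t ∈ Finset.range (Q.natDegree + 1), Q.coeff t * v (μ + dir i (t : ℤ)) := by
  conv_lhs => rw [Polynomial.as_sum_range' Q (Q.natDegree + 1) (Nat.lt_succ_self _)]
  rw [map_sum, Finset.mul_sum, pairV_sum]
  refine Finset.sum_congr rfl fun t ht => ?_
  rw [Polynomial.aeval_monomial, xvar_pow]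
  have : (algebraMap ℂ (Lau d)) (Q.coeff t) = AddMonoidAlgebra.single 0 (Q.coeff t) := by
    rw [AddMonoidAlgebra.coe_algebraMap]; rfl
  rw [this, AddMonoidAlgebra.single_mul_single, AddMonoidAlgebra.single_mul_single]
  rw [pairV_single]
  simp

/-- Laurent monomial presented as an honest polynomial numerator. -/
noncomputable def monX {d : ℕ} (k : Fin d → ℤ) : MvPolynomial (Option (Fin d)) ℂ :=
  MvPolynomial.X none ^ (Finset.univ.sup fun i => (-(k i)).toNat)
    * ∏ i : Fin d, MvPolynomial.X (some i)
        ^ ((k i + (Finset.univ.sup fun i => (-(k i)).toNat) : ℤ)).toNat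

noncomputable def lgen (d : ℕ) : Option (Fin d) → Lau d
  | none => AddMonoidAlgebra.single (fun _ => (-1 : ℤ)) 1
  | some i => xvar i

/-- The Rabinowitsch presentation of the Laurent algebra. -/
noncomputable def laurentHom (d : ℕ) : MvPolynomial (Option (Fin d)) ℂ →ₐ[ℂ] Lau d :=
  MvPolynomial.aeval (lgen d)

lemma single_prod {d : ℕ} (s : Finset (Fin d)) (f : Fin d → (Fin d → ℤ)) :
    ∏ i ∈ s, (AddMonoidAlgebra.single (f i) 1 : Lau d)
      = AddMonoidAlgebra.single (∑ i ∈ s, f i) 1 := by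
  classical
  induction s using Finset.induction_on with
  | empty => simp [AddMonoidAlgebra.one_def]
  | insert _ _ h ih =>
    rw [Finset.prod_insert h, Finset.sum_insert h, ih,
      AddMonoidAlgebra.single_mul_single, one_mul]

lemma laurentHom_monX_aux {d : ℕ} (k : Fin d → ℤ) (K : ℕ) (hKi : ∀ i, -(k i) ≤ (K : ℤ)) :
    laurentHom d (MvPolynomial.X none ^ K
        * ∏ i : Fin d, MvPolynomial.X (some i) ^ ((k i + K : ℤ)).toNat)
      = AddMonoidAlgebra.single k 1 := by
  classical
  rw [map_mul, map_pow, map_prod]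
  simp only [map_pow, laurentHom, MvPolynomial.aeval_X]
  have h2 : ∀ i : Fin d, (lgen d (some i)) ^ ((k i + (K:ℤ))).toNat
      = AddMonoidAlgebra.single (dir i (k i + K)) 1 := by
    intro i
    have h0 : (0:ℤ) ≤ k i + (K:ℤ) := by have := hKi i; omega
    show (xvar i) ^ ((k i + (K:ℤ))).toNat = _
    rw [xvar_pow, Int.toNat_of_nonneg h0]
  rw [Finset.prod_congr rfl fun i _ => h2 i, single_prod _ _]
  show (AddMonoidAlgebra.single (fun _ => (-1:ℤ)) 1 : Lau d) ^ K * _ = _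
  rw [AddMonoidAlgebra.single_pow, AddMonoidAlgebra.single_mul_single, one_pow, one_mul]
  congr 1
  funext j
  have hsum : (∑ i, dir i (k i + K)) j = k j + K := by
    simp only [Finset.sum_apply, dir]
    rw [Finset.sum_ite_eq (Finset.univ) j (fun i => k i + (K:ℤ))]
    simp
  simp only [Pi.add_apply, hsum, Pi.smul_apply, Pi.mul_apply, Pi.natCast_apply, smul_eq_mul,
    nsmul_eq_mul]
  omega

lemma laurentHom_monX {d : ℕ} (k : Fin d → ℤ) :
    laurentHom d (monX k) = AddMonoidAlgebra.single k 1 := by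
  refine laurentHom_monX_aux k _ fun i => ?_
  have : (-(k i)).toNat ≤ Finset.univ.sup fun i => (-(k i)).toNat :=
    Finset.le_sup (f := fun i => (-(k i)).toNat) (Finset.mem_univ i)
  omega

/-- The character of `ℤ^d` with multi-factor `ω`. -/
noncomputable def charOmega {d : ℕ} (ω : Fin d → ℂ) (hω : ∀ i, ω i ≠ 0) :
    Multiplicative (Fin d → ℤ) →* ℂ where
  toFun k := ∏ i, ω i ^ (Multiplicative.toAdd k i)
  map_one' := by simp
  map_mul' x y := by
    simp only [toAdd_mul, Pi.add_apply]
    rw [← Finset.prod_mul_distrib]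
    exact Finset.prod_congr rfl fun i _ => zpow_add₀ (hω i) _ _

lemma charOmega_apply {d : ℕ} (ω : Fin d → ℂ) (hω : ∀ i, ω i ≠ 0) (k : Fin d → ℤ) :
    charOmega ω hω (Multiplicative.ofAdd k) = ∏ i, ω i ^ k i := rfl

lemma prod_zpow_dir {d : ℕ} (ω : Fin d → ℂ) (i : Fin d) (t : ℤ) :
    ∏ j, ω j ^ (dir i t j) = ω i ^ t := by
  classical
  have h : ∀ j, ω j ^ (dir i t j) = if j = i then ω j ^ t else 1 := by
    intro j; by_cases h : j = i <;> simp [dir, h]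
  rw [Finset.prod_congr rfl fun j _ => h j,
    Finset.prod_ite_eq' Finset.univ i fun j => ω j ^ t]
  simp

/-- Evaluation of a Laurent polynomial at `ω ∈ (ℂ*)^d`. -/
noncomputable def evOmega {d : ℕ} (ω : Fin d → ℂ) (hω : ∀ i, ω i ≠ 0) : Lau d →ₐ[ℂ] ℂ :=
  AddMonoidAlgebra.lift ℂ ℂ (Fin d → ℤ) (charOmega ω hω)

lemma evOmega_single {d : ℕ} (ω : Fin d → ℂ) (hω : ∀ i, ω i ≠ 0) (a : Fin d → ℤ) (c : ℂ) :
    evOmega ω hω (AddMonoidAlgebra.single a c) = c * ∏ i, ω i ^ a i := by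
  rw [evOmega, AddMonoidAlgebra.lift_single, charOmega_apply, smul_eq_mul]

lemma evOmega_laurentHom {d : ℕ} (x : Option (Fin d) → ℂ)
    (hx : x none * ∏ i, x (some i) = 1) (hω : ∀ i, x (some i) ≠ 0)
    (f : MvPolynomial (Option (Fin d)) ℂ) :
    evOmega (fun i => x (some i)) hω (laurentHom d f) = MvPolynomial.aeval x f := by
  have hcomp : (evOmega (fun i => x (some i)) hω).comp (laurentHom d)
      = MvPolynomial.aeval x := by
    apply MvPolynomial.algHom_ext
    intro o
    cases o with
    | none =>
      simp only [AlgHom.comp_apply, laurentHom, MvPolynomial.aeval_X]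
      show evOmega _ hω (AddMonoidAlgebra.single (fun _ => (-1:ℤ)) 1) = x none
      rw [evOmega_single, one_mul]
      have h1 : ∀ i, (x (some i)) ^ ((-1 : ℤ)) = (x (some i))⁻¹ := fun i => zpow_neg_one _
      rw [Finset.prod_congr rfl fun i _ => h1 i, Finset.prod_inv_distrib]
      exact (eq_inv_of_mul_eq_one_left hx).symm
    | some i =>
      simp only [AlgHom.comp_apply, laurentHom, MvPolynomial.aeval_X]
      show evOmega _ hω (xvar i) = x (some i)
      rw [xvar, evOmega_single, one_mul, prod_zpow_dir, zpow_one]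
  exact DFunLike.congr_fun hcomp f

open Matrix in
/-- If every maximal (row-selected) minor of a rectangular matrix over a field vanishes,
the matrix has a nontrivial kernel. -/
lemma exists_ker_of_minors {E κ : Type*} [Fintype E] [Fintype κ] [DecidableEq κ] [Nonempty κ]
    (A : Matrix E κ ℂ) (h : ∀ ι : κ → E, (A.submatrix ι id).det = 0) :
    ∃ c : κ → ℂ, c ≠ 0 ∧ A.mulVec c = 0 := by
  by_contra hc
  push_neg at hc
  have hinj : Function.Injective A.mulVecLin := by
    rw [← LinearMap.ker_eq_bot, Submodule.eq_bot_iff]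
    intro c hcmem
    by_contra h0
    exact (hc c h0) hcmem
  have hrank : A.rank = Fintype.card κ := by
    rw [Matrix.rank, LinearMap.finrank_range_of_inj hinj]
    simp [Module.finrank_pi]
  have hspan : Submodule.span ℂ (Set.range A) = ⊤ := by
    have h1 : Aᵀ.rank = Fintype.card κ := by rw [Matrix.rank_transpose]; exact hrank
    rw [Matrix.rank_eq_finrank_span_cols, Matrix.col_transpose] at h1
    change Module.finrank ℂ (Submodule.span ℂ (Set.range A)) = _ at h1
    apply Submodule.eq_top_of_finrank_eq
    rw [h1, Module.finrank_pi]
  obtain ⟨s, hs_sub, hs_span, hs_li⟩ := exists_linearIndependent ℂ (Set.range A)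
  rw [hspan] at hs_span
  have hb : Submodule.span ℂ (Set.range ((↑) : s → (κ → ℂ))) = ⊤ := by
    rwa [Subtype.range_coe]
  let b : Module.Basis s ℂ (κ → ℂ) := Module.Basis.mk hs_li (by rw [hb])
  haveI : Fintype s := hs_li.setFinite.fintype
  have hcard : Fintype.card s = Fintype.card κ := by
    have := Module.finrank_eq_card_basis b
    simpa [Module.finrank_pi] using this.symm
  obtain ⟨g⟩ : Nonempty (κ ≃ s) := ⟨Fintype.equivOfCardEq hcard.symm⟩
  have hpre : ∀ x : s, ∃ e : E, A e = (x : κ → ℂ) := fun x => hs_sub x.2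
  choose pre hpre using hpre
  have hdet := h (fun r => pre (g r))
  have hrows : (fun r : κ => (A.submatrix (fun r => pre (g r)) id) r)
      = fun r => ((g r : κ → ℂ)) := by
    funext r
    show A (pre (g r)) = _
    exact hpre (g r)
  have hli2 : LinearIndependent ℂ (fun r : κ => (A.submatrix (fun r => pre (g r)) id) r) := by
    rw [hrows]
    exact hs_li.comp g g.injective
  have hunit := Matrix.linearIndependent_rows_iff_isUnit.mp hli2
  have := (Matrix.isUnit_iff_isUnit_det (A.submatrix (fun r => pre (g r)) id)).mp hunit
  rw [hdet] at this
  exact (not_isUnit_zero : ¬ IsUnit (0:ℂ)) this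
/-! ### The crystal framework -/

/-- Velocity fields of a crystal framework in motif coordinates. -/
abbrev Vel (d n : ℕ) := (Fin d → ℤ) → Fin n → Fin d → ℂ

/-- Evaluation of a velocity field at cell `k`, motif joint `t`, coordinate `j`. -/
noncomputable def evalJoint (d n : ℕ) (k : Fin d → ℤ) (t : Fin n) (j : Fin d) :
    Vel d n →ₗ[ℂ] ℂ :=
  (LinearMap.proj j).comp ((LinearMap.proj t).comp
    (LinearMap.proj k : Vel d n →ₗ[ℂ] (Fin n → Fin d → ℂ)))

/-- The bar vector `p(e) = p(v,k) − p(w,l)` of the motif edge `e`, where the joint `(t,k)` is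
placed at `p t + k₁a₁ + ⋯ + k_d a_d`. -/
noncomputable def barVec (d n m : ℕ) (a : Fin d → Fin d → ℝ) (p : Fin n → Fin d → ℝ)
    (ev ew : Fin m → Fin n) (ek el : Fin m → Fin d → ℤ) (e : Fin m) (j : Fin d) : ℝ :=
  (p (ev e) j + ∑ i : Fin d, (ek e i : ℝ) * a i j)
    - (p (ew e) j + ∑ i : Fin d, (el e i : ℝ) * a i j)

/-- The first-order flex condition functional of the translate by `μ` of motif bar `e`:
`u ↦ (u(p(v,k+μ)) − u(p(w,l+μ))) · p(e)`. -/
noncomputable def flexFunctional (d n m : ℕ) (a : Fin d → Fin d → ℝ)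
    (p : Fin n → Fin d → ℝ) (ev ew : Fin m → Fin n) (ek el : Fin m → Fin d → ℤ)
    (e : Fin m) (μ : Fin d → ℤ) : Vel d n →ₗ[ℂ] ℂ :=
  ∑ j : Fin d, ((barVec d n m a p ev ew ek el e j : ℂ)) •
    (evalJoint d n (μ + ek e) (ev e) j - evalJoint d n (μ + el e) (ew e) j)

/-- The space `F(C;ℂ)` of complex first-order flexes: velocity fields satisfying the flex
condition for every bar of the crystal framework. -/
noncomputable def FlexSpace (d n m : ℕ) (a : Fin d → Fin d → ℝ) (p : Fin n → Fin d → ℝ)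
    (ev ew : Fin m → Fin n) (ek el : Fin m → Fin d → ℤ) : Submodule ℂ (Vel d n) :=
  ⨅ (e : Fin m), ⨅ (μ : Fin d → ℤ),
    LinearMap.ker (flexFunctional d n m a p ev ew ek el e μ)

/-- The geometric flex spectrum `Γ(C)`: the set of `ω ∈ (ℂ\{0})^d` admitting a nonzero
factor-periodic first-order flex `u(k) = ω^k c` with multi-factor `ω` (equivalently, the
points of rank degeneracy of the transfer function `Ψ_C`). -/
noncomputable def geomSpectrum (d n m : ℕ) (a : Fin d → Fin d → ℝ)
    (p : Fin n → Fin d → ℝ) (ev ew : Fin m → Fin n) (ek el : Fin m → Fin d → ℤ) :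
    Set (Fin d → ℂ) :=
  {ω | (∀ i, ω i ≠ 0) ∧ ∃ c : Fin n → Fin d → ℂ, c ≠ 0 ∧
    ∀ e : Fin m, ∑ j : Fin d,
      ((∏ i : Fin d, ω i ^ ek e i) * c (ev e) j
        - (∏ i : Fin d, ω i ^ el e i) * c (ew e) j)
        * (barVec d n m a p ev ew ek el e j : ℂ) = 0}

section Crystal

variable (d n m : ℕ) (a : Fin d → Fin d → ℝ) (p : Fin n → Fin d → ℝ)
  (ev ew : Fin m → Fin n) (ek el : Fin m → Fin d → ℤ)

/-- The transfer-function row entries, as Laurent polynomials. -/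
noncomputable def Rlau (e : Fin m) (c : Fin n × Fin d) : Lau d :=
  (if c.1 = ev e then
    AddMonoidAlgebra.single (ek e) ((barVec d n m a p ev ew ek el e c.2 : ℝ) : ℂ) else 0)
  - (if c.1 = ew e then
    AddMonoidAlgebra.single (el e) ((barVec d n m a p ev ew ek el e c.2 : ℝ) : ℂ) else 0)

/-- Polynomial lift of `Rlau` through the Rabinowitsch presentation. -/
noncomputable def Rpoly (e : Fin m) (c : Fin n × Fin d) : MvPolynomial (Option (Fin d)) ℂ :=
  (if c.1 = ev e then
    MvPolynomial.C ((barVec d n m a p ev ew ek el e c.2 : ℝ) : ℂ) * monX (ek e) else 0)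
  - (if c.1 = ew e then
    MvPolynomial.C ((barVec d n m a p ev ew ek el e c.2 : ℝ) : ℂ) * monX (el e) else 0)

lemma laurentHom_C {d : ℕ} (b : ℂ) :
    laurentHom d (MvPolynomial.C b) = AddMonoidAlgebra.single 0 b := by
  rw [laurentHom, MvPolynomial.aeval_C]
  rw [AddMonoidAlgebra.coe_algebraMap]
  simp

lemma laurentHom_Rpoly (e : Fin m) (c : Fin n × Fin d) :
    laurentHom d (Rpoly d n m a p ev ew ek el e c) = Rlau d n m a p ev ew ek el e c := by
  rw [Rpoly, Rlau, map_sub]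
  congr 1 <;> split_ifs <;>
    simp [laurentHom_C, laurentHom_monX, map_mul, AddMonoidAlgebra.single_mul_single]

lemma flexFunctional_apply (e : Fin m) (μ : Fin d → ℤ) (u : Vel d n) :
    flexFunctional d n m a p ev ew ek el e μ u
      = ∑ j, ((barVec d n m a p ev ew ek el e j : ℝ) : ℂ)
          * (u (μ + ek e) (ev e) j - u (μ + el e) (ew e) j) := by
  rw [flexFunctional, LinearMap.sum_apply]
  exact Finset.sum_congr rfl fun j _ => rfl

lemma mem_flexSpace_iff (u : Vel d n) :
    u ∈ FlexSpace d n m a p ev ew ek el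
      ↔ ∀ e μ, flexFunctional d n m a p ev ew ek el e μ u = 0 := by
  simp [FlexSpace, Submodule.mem_iInf, LinearMap.mem_ker]

lemma rowsum (u : Vel d n) (e : Fin m) (μ : Fin d → ℤ) :
    ∑ c : Fin n × Fin d, pairV (fun k => u k c.1 c.2)
        (AddMonoidAlgebra.single μ 1 * Rlau d n m a p ev ew ek el e c)
      = flexFunctional d n m a p ev ew ek el e μ u := by
  classical
  rw [Fintype.sum_prod_type, flexFunctional_apply]
  have hterm : ∀ (t : Fin n) (j : Fin d),
      pairV (fun k => u k t j)
        (AddMonoidAlgebra.single μ 1 * Rlau d n m a p ev ew ek el e (t, j))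
      = (if t = ev e then ((barVec d n m a p ev ew ek el e j : ℝ) : ℂ) * u (μ + ek e) t j else 0)
        - (if t = ew e then
            ((barVec d n m a p ev ew ek el e j : ℝ) : ℂ) * u (μ + el e) t j else 0) := by
    intro t j
    rw [Rlau, mul_sub, pairV_sub]
    congr 1 <;> split_ifs <;>
      simp [AddMonoidAlgebra.single_mul_single, pairV_single, pairV_zero]
  have hpush : ∀ (w : Fin n) (F : Fin n → Fin d → ℂ),
      ∑ t : Fin n, ∑ j : Fin d, (if t = w then F t j else 0) = ∑ j, F w j := by
    intro w F
    rw [Finset.sum_comm]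
    refine Finset.sum_congr rfl fun j _ => ?_
    rw [Finset.sum_ite_eq' Finset.univ w fun t => F t j]
    simp
  have h1 := hpush (ev e) fun t j => ((barVec d n m a p ev ew ek el e j : ℝ) : ℂ) * u (μ + ek e) t j
  have h2 := hpush (ew e) fun t j => ((barVec d n m a p ev ew ek el e j : ℝ) : ℂ) * u (μ + el e) t j
  simp only [hterm]
  simp only [Finset.sum_sub_distrib]
  rw [h1, h2, ← Finset.sum_sub_distrib]
  exact Finset.sum_congr rfl fun j _ => (mul_sub _ _ _).symm

lemma zrow (u : Vel d n) (hu : u ∈ FlexSpace d n m a p ev ew ek el) (g : Lau d) (e : Fin m) :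
    ∑ c : Fin n × Fin d, pairV (fun k => u k c.1 c.2) (g * Rlau d n m a p ev ew ek el e c)
      = 0 := by
  classical
  rw [mem_flexSpace_iff] at hu
  induction g using AddMonoidAlgebra.induction_linear with
  | zero =>
    simp only [zero_mul, pairV_zero]
    exact Finset.sum_const_zero
  | add f g hf hg =>
    simp only [add_mul, pairV_add, Finset.sum_add_distrib, hf, hg, add_zero]
  | single aa b =>
    have hsm : ∀ c : Fin n × Fin d,
        (AddMonoidAlgebra.single aa b : Lau d) * Rlau d n m a p ev ew ek el e c
          = b • (AddMonoidAlgebra.single aa 1 * Rlau d n m a p ev ew ek el e c) := by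
      intro c
      rw [← smul_mul_assoc]
      congr 1
      rw [AddMonoidAlgebra.smul_single', mul_one]
    simp only [hsm, pairV_smul, ← Finset.mul_sum]
    rw [rowsum d n m a p ev ew ek el u e aa, hu e aa, mul_zero]

lemma detLau_mem_ann (u : Vel d n) (hu : u ∈ FlexSpace d n m a p ev ew ek el)
    (ι : (Fin n × Fin d) → Fin m) (c₀ : Fin n × Fin d) :
    (Matrix.of fun r c => Rlau d n m a p ev ew ek el (ι r) c).det
      ∈ annIdeal (fun k => u k c₀.1 c₀.2) := by
  classical
  set M : Matrix (Fin n × Fin d) (Fin n × Fin d) (Lau d) :=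
    Matrix.of fun r c => Rlau d n m a p ev ew ek el (ι r) c with hM
  rw [mem_annIdeal_iff]
  intro μ
  have h1 : ∑ c : Fin n × Fin d, pairV (fun k => u k c.1 c.2)
      (AddMonoidAlgebra.single μ 1 * ((M.adjugate * M) c₀ c))
      = pairV (fun k => u k c₀.1 c₀.2) (AddMonoidAlgebra.single μ 1 * M.det) := by
    rw [Matrix.adjugate_mul]
    have : ∀ c : Fin n × Fin d, pairV (fun k => u k c.1 c.2)
        (AddMonoidAlgebra.single μ 1 * ((M.det • (1 : Matrix (Fin n × Fin d) (Fin n × Fin d) (Lau d))) c₀ c))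
        = if c₀ = c then pairV (fun k => u k c.1 c.2) (AddMonoidAlgebra.single μ 1 * M.det)
          else 0 := by
      intro c
      rw [Matrix.smul_apply, Matrix.one_apply, smul_eq_mul, mul_ite, mul_one, mul_zero,
        mul_ite, mul_zero, apply_ite (pairV fun k => u k c.1 c.2), pairV_zero]
    rw [Finset.sum_congr rfl fun c _ => this c,
      Finset.sum_ite_eq Finset.univ c₀
        (fun c => pairV (fun k => u k c.1 c.2) (AddMonoidAlgebra.single μ 1 * M.det))]
    simp
  have h2 : ∑ c : Fin n × Fin d, pairV (fun k => u k c.1 c.2)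
      (AddMonoidAlgebra.single μ 1 * ((M.adjugate * M) c₀ c)) = 0 := by
    have hstep : ∀ c : Fin n × Fin d,
        pairV (fun k => u k c.1 c.2) (AddMonoidAlgebra.single μ 1 * ((M.adjugate * M) c₀ c))
        = ∑ e' : Fin n × Fin d, pairV (fun k => u k c.1 c.2)
            ((AddMonoidAlgebra.single μ 1 * M.adjugate c₀ e')
              * Rlau d n m a p ev ew ek el (ι e') c) := by
      intro c
      rw [Matrix.mul_apply, Finset.mul_sum, pairV_sum]
      exact Finset.sum_congr rfl fun e' _ => by rw [← mul_assoc]; rfl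
    rw [Finset.sum_congr rfl fun c _ => hstep c, Finset.sum_comm]
    exact Finset.sum_eq_zero fun e' _ =>
      zrow d n m a p ev ew ek el u hu (AddMonoidAlgebra.single μ 1 * M.adjugate c₀ e') (ι e')
  rw [← h1, h2]

lemma laurentHom_detPoly (ι : (Fin n × Fin d) → Fin m) :
    laurentHom d ((Matrix.of fun r c => Rpoly d n m a p ev ew ek el (ι r) c).det)
      = (Matrix.of fun r c => Rlau d n m a p ev ew ek el (ι r) c).det := by
  classical
  rw [show (laurentHom d ((Matrix.of fun r c => Rpoly d n m a p ev ew ek el (ι r) c).det))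
      = (laurentHom d).toRingHom ((Matrix.of fun r c => Rpoly d n m a p ev ew ek el (ι r) c).det)
      from rfl,
    RingHom.map_det]
  congr 1
  refine Matrix.ext fun r c => ?_
  show laurentHom d (Rpoly d n m a p ev ew ek el (ι r) c) = Rlau d n m a p ev ew ek el (ι r) c
  exact laurentHom_Rpoly d n m a p ev ew ek el (ι r) c

lemma evOmega_det (ω : Fin d → ℂ) (hω : ∀ i, ω i ≠ 0) (ι : (Fin n × Fin d) → Fin m) :
    evOmega ω hω ((Matrix.of fun r c => Rlau d n m a p ev ew ek el (ι r) c).det)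
      = (Matrix.of fun r c =>
          evOmega ω hω (Rlau d n m a p ev ew ek el (ι r) c)
          : Matrix (Fin n × Fin d) (Fin n × Fin d) ℂ).det := by
  classical
  rw [show (evOmega ω hω ((Matrix.of fun r c => Rlau d n m a p ev ew ek el (ι r) c).det))
      = (evOmega ω hω).toRingHom ((Matrix.of fun r c => Rlau d n m a p ev ew ek el (ι r) c).det)
      from rfl,
    RingHom.map_det]
  rfl

lemma mem_spectrum_of_ker (ω : Fin d → ℂ) (hω : ∀ i, ω i ≠ 0) (c' : Fin n × Fin d → ℂ)
    (hc0 : c' ≠ 0)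
    (hker : ∀ e, ∑ cc : Fin n × Fin d,
      evOmega ω hω (Rlau d n m a p ev ew ek el e cc) * c' cc = 0) :
    ω ∈ geomSpectrum d n m a p ev ew ek el := by
  classical
  refine ⟨hω, fun t j => c' (t, j), ?_, ?_⟩
  · intro h
    apply hc0
    funext cc
    have := congrFun (congrFun h cc.1) cc.2
    simpa using this
  · intro e
    have h := hker e
    rw [Fintype.sum_prod_type] at h
    have hterm : ∀ (t : Fin n) (j : Fin d),
        evOmega ω hω (Rlau d n m a p ev ew ek el e (t, j)) * c' (t, j)
        = (if t = ev e then
            ((barVec d n m a p ev ew ek el e j : ℝ) : ℂ) * (∏ i, ω i ^ ek e i) * c' (t, j)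
            else 0)
          - (if t = ew e then
            ((barVec d n m a p ev ew ek el e j : ℝ) : ℂ) * (∏ i, ω i ^ el e i) * c' (t, j)
            else 0) := by
      intro t j
      rw [Rlau, map_sub, sub_mul]
      congr 1 <;> split_ifs <;> simp [evOmega_single, map_zero] <;> ring
    rw [Finset.sum_congr rfl fun t _ => Finset.sum_congr rfl fun j _ => hterm t j] at h
    have hpush : ∀ (w : Fin n) (F : Fin n → Fin d → ℂ),
        ∑ t : Fin n, ∑ j : Fin d, (if t = w then F t j else 0) = ∑ j, F w j := by
      intro w F
      rw [Finset.sum_comm]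
      refine Finset.sum_congr rfl fun j _ => ?_
      rw [Finset.sum_ite_eq' Finset.univ w fun t => F t j]
      simp
    simp only [Finset.sum_sub_distrib] at h
    rw [hpush (ev e) (fun t j => ((barVec d n m a p ev ew ek el e j : ℝ) : ℂ)
          * (∏ i, ω i ^ ek e i) * c' (t, j)),
      hpush (ew e) (fun t j => ((barVec d n m a p ev ew ek el e j : ℝ) : ℂ)
          * (∏ i, ω i ^ el e i) * c' (t, j)), ← Finset.sum_sub_distrib] at h
    rw [← h]
    exact Finset.sum_congr rfl fun j _ => by ring

lemma not_fd_of_infinite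
    (hinf : (geomSpectrum d n m a p ev ew ek el).Infinite) :
    ¬ FiniteDimensional ℂ (FlexSpace d n m a p ev ew ek el) := by
  classical
  intro hFD
  haveI : Infinite ↥(geomSpectrum d n m a p ev ew ek el) := hinf.to_subtype
  have hω : ∀ ω : ↥(geomSpectrum d n m a p ev ew ek el), ∀ i, (ω : Fin d → ℂ) i ≠ 0 :=
    fun ω => ω.2.1
  have hc : ∀ ω : ↥(geomSpectrum d n m a p ev ew ek el), ∃ c : Fin n → Fin d → ℂ, c ≠ 0 ∧
      ∀ e : Fin m, ∑ j : Fin d,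
        ((∏ i : Fin d, (ω : Fin d → ℂ) i ^ ek e i) * c (ev e) j
          - (∏ i : Fin d, (ω : Fin d → ℂ) i ^ el e i) * c (ew e) j)
          * (barVec d n m a p ev ew ek el e j : ℂ) = 0 :=
    fun ω => ω.2.2
  choose cc hcc0 hccE using hc
  let uu : ↥(geomSpectrum d n m a p ev ew ek el) → Vel d n :=
    fun ω => fun k t j => (∏ i, (ω : Fin d → ℂ) i ^ k i) * cc ω t j
  have huu : ∀ ω, uu ω ∈ FlexSpace d n m a p ev ew ek el := by
    intro ω
    rw [mem_flexSpace_iff]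
    intro e μ
    rw [flexFunctional_apply]
    have hsplit : ∀ κ : Fin d → ℤ,
        (∏ i, (ω : Fin d → ℂ) i ^ (μ i + κ i))
          = (∏ i, (ω : Fin d → ℂ) i ^ μ i) * ∏ i, (ω : Fin d → ℂ) i ^ κ i := by
      intro κ
      rw [← Finset.prod_mul_distrib]
      exact Finset.prod_congr rfl fun i _ => zpow_add₀ (hω ω i) _ _
    calc ∑ j, ((barVec d n m a p ev ew ek el e j : ℝ) : ℂ)
          * (uu ω (μ + ek e) (ev e) j - uu ω (μ + el e) (ew e) j)
        = (∏ i, (ω : Fin d → ℂ) i ^ μ i) * ∑ j : Fin d,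
            ((∏ i : Fin d, (ω : Fin d → ℂ) i ^ ek e i) * cc ω (ev e) j
              - (∏ i : Fin d, (ω : Fin d → ℂ) i ^ el e i) * cc ω (ew e) j)
              * (barVec d n m a p ev ew ek el e j : ℂ) := by
          rw [Finset.mul_sum]
          refine Finset.sum_congr rfl fun j _ => ?_
          show ((barVec d n m a p ev ew ek el e j : ℝ) : ℂ)
              * ((∏ i, (ω : Fin d → ℂ) i ^ (μ i + ek e i)) * cc ω (ev e) j
                - (∏ i, (ω : Fin d → ℂ) i ^ (μ i + el e i)) * cc ω (ew e) j) = _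
          rw [hsplit (ek e), hsplit (el e)]
          ring
      _ = 0 := by rw [hccE ω e, mul_zero]
  -- linear independence of the factor-periodic flexes
  have hinj : Function.Injective
      (fun ω : ↥(geomSpectrum d n m a p ev ew ek el) => charOmega (ω : Fin d → ℂ) (hω ω)) := by
    intro ω ω' h
    apply Subtype.ext
    funext i
    have h1 := DFunLike.congr_fun h (Multiplicative.ofAdd (dir i 1))
    rw [charOmega_apply, charOmega_apply, prod_zpow_dir, prod_zpow_dir, zpow_one, zpow_one] at h1
    exact h1
  have hchar : LinearIndependent ℂ
      (fun ω : ↥(geomSpectrum d n m a p ev ew ek el) => ⇑(charOmega (ω : Fin d → ℂ) (hω ω))) :=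
    (linearIndependent_monoidHom (Multiplicative (Fin d → ℤ)) ℂ).comp _ hinj
  have hli : LinearIndependent ℂ uu := by
    rw [linearIndependent_iff']
    intro sfin g hsum ω hωmem
    have hco : ∀ (t : Fin n) (j : Fin d), g ω * cc ω t j = 0 := by
      intro t j
      have h2 : ∑ ω' ∈ sfin, (g ω' * cc ω' t j)
          • (⇑(charOmega (ω' : Fin d → ℂ) (hω ω')) : Multiplicative (Fin d → ℤ) → ℂ) = 0 := by
        funext k
        have h3 := congrFun (congrFun (congrFun hsum (Multiplicative.toAdd k)) t) j
        simp only [Finset.sum_apply, Pi.smul_apply, Pi.zero_apply, smul_eq_mul] at h3 ⊢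
        rw [← h3]
        refine Finset.sum_congr rfl fun ω' _ => ?_
        show g ω' * cc ω' t j * ∏ i, (ω' : Fin d → ℂ) i ^ (Multiplicative.toAdd k i)
          = g ω' * ((∏ i, (ω' : Fin d → ℂ) i ^ (Multiplicative.toAdd k i)) * cc ω' t j)
        ring
      exact linearIndependent_iff'.mp hchar sfin (fun ω' => g ω' * cc ω' t j) h2 ω hωmem
    obtain ⟨t, hj⟩ : ∃ t, cc ω t ≠ 0 := by
      by_contra hall
      push_neg at hall
      exact hcc0 ω (funext fun t => hall t)
    obtain ⟨j, hne⟩ : ∃ j, cc ω t j ≠ 0 := by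
      by_contra hall
      push_neg at hall
      exact hj (funext fun j => hall j)
    exact (mul_eq_zero.mp (hco t j)).resolve_right hne
  have hli2 : LinearIndependent ℂ
      (fun ω : ↥(geomSpectrum d n m a p ev ew ek el) => (⟨uu ω, huu ω⟩ : ↥(FlexSpace d n m a p ev ew ek el))) := by
    apply LinearIndependent.of_comp (FlexSpace d n m a p ev ew ek el).subtype
    exact hli
  exact Module.Finite.not_linearIndependent_of_infinite _ hli2

lemma fd_of_finite (hS : (geomSpectrum d n m a p ev ew ek el).Finite) :
    FiniteDimensional ℂ (FlexSpace d n m a p ev ew ek el) := by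
  classical
  by_cases hd0 : d = 0
  · subst hd0
    haveI : Subsingleton (Vel 0 n) :=
      ⟨fun u v => funext fun k => funext fun t => funext fun j => j.elim0⟩
    haveI : Subsingleton ↥(FlexSpace 0 n m a p ev ew ek el) :=
      ⟨fun x y => Subtype.ext (Subsingleton.elim _ _)⟩
    infer_instance
  by_cases hn0 : n = 0
  · subst hn0
    haveI : Subsingleton (Vel d 0) :=
      ⟨fun u v => funext fun k => funext fun t => t.elim0⟩
    haveI : Subsingleton ↥(FlexSpace d 0 m a p ev ew ek el) :=
      ⟨fun x y => Subtype.ext (Subsingleton.elim _ _)⟩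
    infer_instance
  haveI hne : Nonempty (Fin n × Fin d) :=
    ⟨(⟨0, Nat.pos_of_ne_zero hn0⟩, ⟨0, Nat.pos_of_ne_zero hd0⟩)⟩
  set hrab : MvPolynomial (Option (Fin d)) ℂ :=
    MvPolynomial.X none * ∏ i : Fin d, MvPolynomial.X (some i) - 1 with hhrab
  set K : Ideal (MvPolynomial (Option (Fin d)) ℂ) :=
    Ideal.span ({hrab} ∪ Set.range (fun ι : (Fin n × Fin d) → Fin m =>
      (Matrix.of fun r c => Rpoly d n m a p ev ew ek el (ι r) c).det)) with hK
  have hrab0 : laurentHom d hrab = 0 := by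
    rw [hhrab, map_sub, map_mul, map_prod, map_one]
    have h1 : ∀ i : Fin d, laurentHom d (MvPolynomial.X (some i)) = xvar i := by
      intro i
      rw [laurentHom, MvPolynomial.aeval_X]
      rfl
    have h2 : laurentHom d (MvPolynomial.X none)
        = AddMonoidAlgebra.single (fun _ => (-1 : ℤ)) 1 := by
      rw [laurentHom, MvPolynomial.aeval_X]
      rfl
    rw [Finset.prod_congr rfl fun i _ => h1 i, h2]
    have h3 : ∏ i : Fin d, (xvar i : Lau d)
        = AddMonoidAlgebra.single (∑ i : Fin d, dir i 1) 1 := single_prod _ _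
    rw [h3, AddMonoidAlgebra.single_mul_single, one_mul]
    have h4 : ((fun _ => (-1:ℤ)) + ∑ i : Fin d, dir i 1) = 0 := by
      funext j
      have : (∑ i : Fin d, dir i 1) j = 1 := by
        simp only [Finset.sum_apply, dir]
        rw [Finset.sum_ite_eq Finset.univ j (fun _ => (1:ℤ))]
        simp
      simp [this]
    rw [h4, ← AddMonoidAlgebra.one_def, sub_self]
  have hKann : ∀ u ∈ FlexSpace d n m a p ev ew ek el, ∀ c₀ : Fin n × Fin d, ∀ g ∈ K,
      laurentHom d g ∈ annIdeal (fun k => u k c₀.1 c₀.2) := by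
    intro u hu c₀ g hg
    have hle : K ≤ Ideal.comap (laurentHom d).toRingHom
        (annIdeal (fun k => u k c₀.1 c₀.2)) := by
      rw [hK, Ideal.span_le]
      intro x hx
      rcases hx with hx | hx
      · rw [Set.mem_singleton_iff] at hx
        subst hx
        rw [SetLike.mem_coe, Ideal.mem_comap]
        show laurentHom d hrab ∈ _
        rw [hrab0]
        exact Ideal.zero_mem _
      · obtain ⟨ι, rfl⟩ := hx
        rw [SetLike.mem_coe, Ideal.mem_comap]
        show laurentHom d _ ∈ _
        rw [laurentHom_detPoly]
        exact detLau_mem_ann d n m a p ev ew ek el u hu ι c₀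
    exact hle hg
  have haeval_eval : ∀ (x : Option (Fin d) → ℂ) (q : MvPolynomial (Option (Fin d)) ℂ),
      MvPolynomial.aeval x q = MvPolynomial.eval x q := by
    intro x q
    rw [← MvPolynomial.coe_aeval_eq_eval]
    rfl
  have hzl : ∀ x ∈ MvPolynomial.zeroLocus ℂ K,
      (fun i => x (some i)) ∈ geomSpectrum d n m a p ev ew ek el := by
    intro x hx
    have hxr : MvPolynomial.eval x hrab = 0 :=
      hx hrab (Ideal.subset_span (Or.inl rfl))
    rw [hhrab, map_sub, map_mul, map_prod, map_one] at hxr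
    simp only [MvPolynomial.eval_X] at hxr
    have hx1 : x none * ∏ i, x (some i) = 1 := by linear_combination hxr
    have hωx : ∀ i, x (some i) ≠ 0 := by
      intro i hi
      apply (one_ne_zero : (1:ℂ) ≠ 0)
      rw [← hx1, Finset.prod_eq_zero (Finset.mem_univ i) hi, mul_zero]
    have hminor : ∀ ι : (Fin n × Fin d) → Fin m,
        (((Matrix.of fun e cc => evOmega (fun i => x (some i)) hωx
            (Rlau d n m a p ev ew ek el e cc))
          : Matrix (Fin m) (Fin n × Fin d) ℂ).submatrix ι id).det = 0 := by
      intro ι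
      have hxd : MvPolynomial.eval x
          ((Matrix.of fun r c => Rpoly d n m a p ev ew ek el (ι r) c).det) = 0 :=
        hx _ (Ideal.subset_span (Or.inr ⟨ι, rfl⟩))
      have hsub : (((Matrix.of fun e cc => evOmega (fun i => x (some i)) hωx
            (Rlau d n m a p ev ew ek el e cc))
          : Matrix (Fin m) (Fin n × Fin d) ℂ).submatrix ι id)
          = Matrix.of fun r c => evOmega (fun i => x (some i)) hωx
              (Rlau d n m a p ev ew ek el (ι r) c) := rfl
      rw [hsub, ← evOmega_det d n m a p ev ew ek el _ hωx ι,
        ← laurentHom_detPoly d n m a p ev ew ek el ι,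
        evOmega_laurentHom x hx1 hωx, haeval_eval]
      exact hxd
    obtain ⟨c', hc0, hker⟩ := exists_ker_of_minors _ hminor
    refine mem_spectrum_of_ker d n m a p ev ew ek el _ hωx c' hc0 fun e => ?_
    have := congrFun hker e
    simpa [Matrix.mulVec, dotProduct] using this
  have key : ∀ i : Fin d, ∃ Q : Polynomial ℂ, Q.Monic ∧ Q.coeff 0 ≠ 0 ∧
      ∀ u ∈ FlexSpace d n m a p ev ew ek el, ∀ c₀ : Fin n × Fin d,
        Polynomial.aeval (xvar i) Q ∈ annIdeal (fun k => u k c₀.1 c₀.2) := by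
    intro i
    set P : Polynomial ℂ := ∏ ω' ∈ hS.toFinset, (Polynomial.X - Polynomial.C (ω' i)) with hP
    set F : MvPolynomial (Option (Fin d)) ℂ :=
      ∏ ω' ∈ hS.toFinset, (MvPolynomial.X (some i) - MvPolynomial.C (ω' i)) with hF
    have hFvan : F ∈ MvPolynomial.vanishingIdeal ℂ (MvPolynomial.zeroLocus ℂ K) := by
      rw [MvPolynomial.mem_vanishingIdeal_iff]
      intro x hx
      have hω' := hzl x hx
      rw [hF, map_prod]
      refine Finset.prod_eq_zero (hS.mem_toFinset.mpr hω') ?_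
      simp
    rw [MvPolynomial.vanishingIdeal_zeroLocus_eq_radical] at hFvan
    obtain ⟨r, hr⟩ := Ideal.mem_radical_iff.mp hFvan
    have hPmon : P.Monic := by
      rw [hP]
      exact Polynomial.monic_prod_of_monic _ _ fun ω' _ => Polynomial.monic_X_sub_C _
    refine ⟨P ^ r, hPmon.pow r, ?_, ?_⟩
    · rw [Polynomial.coeff_zero_eq_eval_zero, Polynomial.eval_pow]
      apply pow_ne_zero
      rw [hP, Polynomial.eval_prod]
      rw [Finset.prod_ne_zero_iff]
      intro ω' hω'
      simp only [Polynomial.eval_sub, Polynomial.eval_X, Polynomial.eval_C, zero_sub]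
      exact neg_ne_zero.mpr ((hS.mem_toFinset.mp hω').1 i)
    · intro u hu c₀
      have him := hKann u hu c₀ (F ^ r) hr
      rw [map_pow] at him
      have hFP : laurentHom d F = Polynomial.aeval (xvar i) P := by
        rw [hF, hP, map_prod, map_prod]
        refine Finset.prod_congr rfl fun ω' _ => ?_
        rw [map_sub, map_sub, Polynomial.aeval_X, Polynomial.aeval_C]
        have hX : laurentHom d (MvPolynomial.X (some i)) = xvar i := by
          rw [laurentHom, MvPolynomial.aeval_X]; rfl
        have hC : laurentHom d (MvPolynomial.C (ω' i)) = algebraMap ℂ (Lau d) (ω' i) := by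
          simp [laurentHom]
        rw [hX, hC]
      rw [hFP, ← map_pow] at him
      exact him
  choose QQ hQmon hQ0 hQann using key
  set s : Fin d → ℕ := fun i => (QQ i).natDegree with hs
  let Φ : ↥(FlexSpace d n m a p ev ew ek el) →ₗ[ℂ]
      (((Fin n × Fin d) × (∀ i : Fin d, Fin (s i))) → ℂ) :=
    { toFun := fun U (q : (Fin n × Fin d) × (∀ i : Fin d, Fin (s i))) => (U : Vel d n) (fun i => ((q.2 i : ℕ) : ℤ)) q.1.1 q.1.2
      map_add' := fun U V => rfl
      map_smul' := fun r U => rfl }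
  have hΦinj : Function.Injective Φ := by
    rw [← LinearMap.ker_eq_bot, Submodule.eq_bot_iff]
    intro U hU
    have hU0 : ∀ q : (Fin n × Fin d) × (∀ i : Fin d, Fin (s i)),
        (U : Vel d n) (fun i => ((q.2 i : ℕ) : ℤ)) q.1.1 q.1.2 = 0 :=
      fun q => congrFun hU q
    have hvan : ∀ (t : Fin n) (j : Fin d) (k : Fin d → ℤ), (U : Vel d n) k t j = 0 := by
      intro t j
      refine vanish_of_box s (fun i t' => (QQ i).coeff t') hQ0 ?_ _ ?_ ?_
      · intro i
        show (QQ i).coeff ((QQ i).natDegree) ≠ 0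
        rw [(hQmon i).coeff_natDegree]
        exact one_ne_zero
      · intro i μ
        have hmem := hQann i (U : Vel d n) U.2 (t, j)
        rw [mem_annIdeal_iff] at hmem
        have := hmem μ
        rw [pairV_single_mul_aeval] at this
        exact this
      · intro μ hμ
        have hq : ∀ i, ((μ i).toNat) < s i := fun i => by have := hμ i; omega
        have := hU0 ((t, j), fun i => (⟨(μ i).toNat, hq i⟩ : Fin (s i)))
        have hμeq : (fun i => (((⟨(μ i).toNat, hq i⟩ : Fin (s i)) : ℕ) : ℤ)) = μ := by
          funext i
          have := (hμ i).1
          simp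
          omega
        rwa [hμeq] at this
    exact Subtype.ext (funext fun k => funext fun t => funext fun j => hvan t j k)
  exact FiniteDimensional.of_injective Φ hΦinj

end Crystal

/-- For a crystal framework `C` in `ℝ^d` (periods `a₁,…,a_d` linearly independent, motif
joints `p₁,…,p_n`, motif bars of nonzero length), the first-order flex space `F(C;ℂ)` is
finite-dimensional if and only if the geometric flex spectrum `Γ(C)` is a finite set. -/
theorem flexSpace_finiteDimensional_iff_geomSpectrum_finite (d n m : ℕ)
    (a : Fin d → Fin d → ℝ) (p : Fin n → Fin d → ℝ)
    (ev ew : Fin m → Fin n) (ek el : Fin m → Fin d → ℤ)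
    (ha : LinearIndependent ℝ a)
    (hinj : Function.Injective fun tk : Fin n × (Fin d → ℤ) =>
      fun j => p tk.1 j + ∑ i : Fin d, (tk.2 i : ℝ) * a i j)
    (hbar : ∀ e, ∃ j, barVec d n m a p ev ew ek el e j ≠ 0) :
    FiniteDimensional ℂ (FlexSpace d n m a p ev ew ek el) ↔
      (geomSpectrum d n m a p ev ew ek el).Finite := by
  constructor
  · intro hFD
    by_contra hni
    exact not_fd_of_infinite d n m a p ev ew ek el hni hFD
  · exact fd_of_finite d n m a p ev ew ek el
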